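/- arXiv:2208.06877 — 2 statements merged into one kernel-verified Lean document; each statement's English description precedes it below -/
import Mathlib

section
/- For i.i.d. Rademacher entries, the variance of the Hutchinson estimator v^T A v of tr(A) is at most the variance of the estimator with standard Gaussian entries, for any symmetric matrix A. -/
/-!
Write `xᵀAx = Σᵢ Aᵢᵢ xᵢ² + G(x)` with `G(x) = Σ_{i ≠ j} Aᵢⱼ xᵢ xⱼ`. For any independent family of
centred coordinates with unit second moment, `E[G(x)²]` only involves the moments
`E[xᵢ² xⱼ²] = 1` (`i ≠ j`), so it is the same for Rademacher and Gaussian vectors. For Rademacher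
signs the diagonal part is the constant `tr A`, hence the variance is `Var G(u) ≤ E[G(u)²]`. For
Gaussians the diagonal part is uncorrelated with the centred `G(w)`, hence the variance is
`Var(Σᵢ Aᵢᵢ wᵢ²) + E[G(w)²] ≥ E[G(w)²]`.
-/

open Matrix MeasureTheory ProbabilityTheory Finset
open scoped ENNReal NNReal

instance : ENNReal.HolderTriple 4 4 2 where
  inv_add_inv_eq_inv := by
    rw [← two_mul, show (4 : ℝ≥0∞) = 2 * 2 by norm_num,
      ENNReal.mul_inv (by simp) (by simp), ← mul_assoc,
      ENNReal.mul_inv_cancel two_ne_zero ENNReal.ofNat_ne_top, one_mul]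

structure IsStandardizedIndep {Ω ι : Type*} [MeasurableSpace Ω] (μ : Measure Ω)
    (v : Ω → ι → ℝ) : Prop where
  indep : iIndepFun (fun i ω => v ω i) μ
  memLp_four : ∀ i, MemLp (fun ω => v ω i) 4 μ
  integral_eq_zero : ∀ i, ∫ ω, v ω i ∂μ = 0
  integral_sq : ∀ i, ∫ ω, v ω i ^ 2 ∂μ = 1

namespace IsStandardizedIndep

variable {Ω ι : Type*} [MeasurableSpace Ω] {μ : Measure Ω} {v : Ω → ι → ℝ}
  (hv : IsStandardizedIndep μ v)
include hv

lemma memLp_mul (i j : ι) : MemLp (fun ω => v ω i * v ω j) 2 μ :=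
  (hv.memLp_four j).mul (hv.memLp_four i)

lemma integrable_mul_mul (a b c d : ι) :
    Integrable (fun ω => v ω a * v ω b * (v ω c * v ω d)) μ :=
  (hv.memLp_mul a b).integrable_mul (hv.memLp_mul c d)

lemma integral_sum_mul_sum {α β : Type*} (s : Finset α) (t : Finset β) (a : α → ℝ) (b : β → ℝ)
    (i j : α → ι) (k l : β → ι) :
    ∫ ω, (∑ x ∈ s, a x * (v ω (i x) * v ω (j x))) * (∑ y ∈ t, b y * (v ω (k y) * v ω (l y))) ∂μ
      = ∑ x ∈ s, ∑ y ∈ t, a x * b y * ∫ ω, v ω (i x) * v ω (j x) * (v ω (k y) * v ω (l y)) ∂μ := by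
  have hexp ω : (∑ x ∈ s, a x * (v ω (i x) * v ω (j x))) * (∑ y ∈ t, b y * (v ω (k y) * v ω (l y)))
      = ∑ x ∈ s, ∑ y ∈ t, a x * b y * (v ω (i x) * v ω (j x) * (v ω (k y) * v ω (l y))) := by
    rw [sum_mul_sum]
    exact sum_congr rfl fun x _ => sum_congr rfl fun y _ => by ring
  simp_rw [hexp]
  rw [integral_finsetSum _ fun x _ => integrable_finsetSum _ fun y _ =>
    (hv.integrable_mul_mul _ _ _ _).const_mul _]
  refine sum_congr rfl fun x _ => ?_
  rw [integral_finsetSum _ fun y _ => (hv.integrable_mul_mul _ _ _ _).const_mul _]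
  simp_rw [integral_const_mul]

lemma integral_mul_eq_zero {i j : ι} (hij : i ≠ j) : ∫ ω, v ω i * v ω j ∂μ = 0 := by
  rw [(hv.indep.indepFun hij).integral_fun_mul_eq_mul_integral
    (hv.memLp_four i).aestronglyMeasurable (hv.memLp_four j).aestronglyMeasurable,
    hv.integral_eq_zero i, zero_mul]

lemma integral_sq_mul_sq {i j : ι} (hij : i ≠ j) : ∫ ω, v ω i ^ 2 * v ω j ^ 2 ∂μ = 1 := by
  have hind : IndepFun (fun ω => v ω i ^ 2) (fun ω => v ω j ^ 2) μ :=
    (hv.indep.indepFun hij).comp (measurable_id.pow_const 2) (measurable_id.pow_const 2)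
  rw [hind.integral_fun_mul_eq_mul_integral ((hv.memLp_four i).aestronglyMeasurable.pow 2)
    ((hv.memLp_four j).aestronglyMeasurable.pow 2), hv.integral_sq i, hv.integral_sq j, one_mul]

lemma integral_mul_mul_mul_eq_zero {a b c m : ι} (ha : a ≠ m) (hb : b ≠ m) (hc : c ≠ m) :
    ∫ ω, v ω a * v ω b * v ω c * v ω m ∂μ = 0 := by
  classical
  have hdisj : Disjoint ({a, b, c} : Finset ι) {m} := by simp [ha.symm, hb.symm, hc.symm]
  have hφ : Measurable fun x : ({a, b, c} : Finset ι) → ℝ =>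
      x ⟨a, by simp⟩ * x ⟨b, by simp⟩ * x ⟨c, by simp⟩ := by fun_prop
  have hψ : Measurable fun x : ({m} : Finset ι) → ℝ => x ⟨m, by simp⟩ := by fun_prop
  have hind : IndepFun (fun ω => v ω a * v ω b * v ω c) (fun ω => v ω m) μ :=
    (hv.indep.indepFun_finset₀ _ _ hdisj fun i => (hv.memLp_four i).aemeasurable).comp hφ hψ
  have hmeas i : AEStronglyMeasurable (fun ω => v ω i) μ := (hv.memLp_four i).aestronglyMeasurable
  rw [hind.integral_fun_mul_eq_mul_integral (((hmeas a).mul (hmeas b)).mul (hmeas c)) (hmeas m),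
    hv.integral_eq_zero m, mul_zero]

lemma integral_mul_mul_of_ne [DecidableEq ι] (p : ι × ι) {q : ι × ι} (hq : q.1 ≠ q.2) :
    ∫ ω, v ω p.1 * v ω p.2 * (v ω q.1 * v ω q.2) ∂μ =
      (if q = p then 1 else 0) + (if q = p.swap then 1 else 0) := by
  obtain ⟨a, b⟩ := p
  obtain ⟨c, d⟩ := q
  dsimp only at hq ⊢
  simp only [Prod.mk.injEq, Prod.swap_prod_mk]
  by_cases hp : c = a ∧ d = b
  · obtain ⟨rfl, rfl⟩ := hp
    rw [if_pos ⟨rfl, rfl⟩, if_neg fun h => hq h.1, add_zero]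
    convert hv.integral_sq_mul_sq hq using 3 with ω
    ring
  by_cases hs : c = b ∧ d = a
  · obtain ⟨rfl, rfl⟩ := hs
    rw [if_neg fun h => hq h.1, if_pos ⟨rfl, rfl⟩, zero_add]
    convert hv.integral_sq_mul_sq hq using 3 with ω
    ring
  rw [if_neg hp, if_neg hs, add_zero]
  -- Now one of `c`, `d` occurs exactly once among `a, b, c, d`.
  by_cases hc : c ≠ a ∧ c ≠ b
  · convert hv.integral_mul_mul_mul_eq_zero hc.1.symm hc.2.symm hq.symm using 3 with ω
    ring
  · rw [← hv.integral_mul_mul_mul_eq_zero (a := a) (b := b) (c := c) (m := d) (by grind)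
      (by grind) hq]
    simp_rw [mul_assoc]

end IsStandardizedIndep

section QuadForm

variable {ι : Type*} [Fintype ι]

def diagQuadForm (A : Matrix ι ι ℝ) (x : ι → ℝ) : ℝ := ∑ i, A i i * x i ^ 2

lemma diagQuadForm_eq_trace {A : Matrix ι ι ℝ} {x : ι → ℝ} (hx : ∀ i, x i ^ 2 = 1) :
    diagQuadForm A x = A.trace := by
  simp [diagQuadForm, hx, trace]

def offDiagQuadForm (A : Matrix ι ι ℝ) (x : ι → ℝ) : ℝ :=
  ∑ p ∈ univ.offDiag, A p.1 p.2 * (x p.1 * x p.2)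

lemma dotProduct_mulVec_self_eq (A : Matrix ι ι ℝ) (x : ι → ℝ) :
    x ⬝ᵥ A *ᵥ x = diagQuadForm A x + offDiagQuadForm A x := by
  classical
  have h : x ⬝ᵥ A *ᵥ x = ∑ p ∈ univ ×ˢ univ, A p.1 p.2 * (x p.1 * x p.2) := by
    simp only [dotProduct, mulVec, mul_sum, sum_product]
    exact sum_congr rfl fun i _ => sum_congr rfl fun j _ => by ring
  rw [h, ← diag_union_offDiag, sum_union (disjoint_diag_offDiag _), sum_diag]
  simp only [diagQuadForm, offDiagQuadForm, sq]

namespace IsStandardizedIndep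

variable {Ω : Type*} [MeasurableSpace Ω] {μ : Measure Ω} {v : Ω → ι → ℝ}
  (hv : IsStandardizedIndep μ v) (A : Matrix ι ι ℝ)
include hv

lemma memLp_diagQuadForm : MemLp (fun ω => diagQuadForm A (v ω)) 2 μ :=
  memLp_finsetSum _ fun i _ => by simpa only [sq] using (hv.memLp_mul i i).const_mul (A i i)

lemma memLp_offDiagQuadForm : MemLp (fun ω => offDiagQuadForm A (v ω)) 2 μ :=
  memLp_finsetSum _ fun p _ => (hv.memLp_mul p.1 p.2).const_mul _

lemma integral_offDiagQuadForm [IsFiniteMeasure μ] : ∫ ω, offDiagQuadForm A (v ω) ∂μ = 0 := by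
  simp only [offDiagQuadForm]
  rw [integral_finsetSum _ fun p _ =>
    ((hv.memLp_mul p.1 p.2).integrable one_le_two).const_mul _]
  refine sum_eq_zero fun p hp => ?_
  rw [integral_const_mul, hv.integral_mul_eq_zero (mem_offDiag.1 hp).2.2, mul_zero]

lemma integral_offDiagQuadForm_sq :
    ∫ ω, offDiagQuadForm A (v ω) ^ 2 ∂μ =
      ∑ p ∈ univ.offDiag, A p.1 p.2 * (A p.1 p.2 + A p.2 p.1) := by
  classical
  simp only [offDiagQuadForm, sq]
  rw [hv.integral_sum_mul_sum]
  refine sum_congr rfl fun p hp => ?_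
  rw [sum_congr rfl fun q hq => by rw [hv.integral_mul_mul_of_ne p (mem_offDiag.1 hq).2.2]]
  have hp' : p.swap ∈ univ.offDiag := by simpa [eq_comm] using hp
  simp [mul_add, sum_add_distrib, hp, hp']

lemma integral_diagQuadForm_mul_offDiagQuadForm :
    ∫ ω, diagQuadForm A (v ω) * offDiagQuadForm A (v ω) ∂μ = 0 := by
  classical
  simp only [diagQuadForm, offDiagQuadForm, sq]
  rw [hv.integral_sum_mul_sum]
  refine sum_eq_zero fun i _ => sum_eq_zero fun q hq => ?_
  have hq' := (mem_offDiag.1 hq).2.2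
  have hq_ne : q ≠ (i, i) := fun h => hq' (by rw [h])
  rw [hv.integral_mul_mul_of_ne (i, i) hq', Prod.swap_prod_mk, if_neg hq_ne, add_zero, mul_zero]

end IsStandardizedIndep

end QuadForm

section

variable {Ω : Type*} [MeasurableSpace Ω] {μ : Measure Ω} [IsProbabilityMeasure μ]

lemma variance_const_add_le_integral_sq {X : Ω → ℝ} (hX : AEStronglyMeasurable X μ) (c : ℝ) :
    Var[fun ω => c + X ω; μ] ≤ ∫ ω, X ω ^ 2 ∂μ := by
  rw [variance_const_add hX c]
  exact variance_le_expectation_sq hX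

lemma integral_sq_le_variance_add {X Y : Ω → ℝ} (hX : MemLp X 2 μ) (hY : MemLp Y 2 μ)
    (hXY : ∫ ω, X ω * Y ω ∂μ = 0) (hY₀ : ∫ ω, Y ω ∂μ = 0) :
    ∫ ω, Y ω ^ 2 ∂μ ≤ Var[fun ω => X ω + Y ω; μ] := by
  have hcov : cov[X, Y; μ] = 0 := by
    rw [covariance_eq_sub hX hY]
    simp [hXY, hY₀]
  have hvar : Var[Y; μ] = ∫ ω, Y ω ^ 2 ∂μ := by
    rw [variance_eq_sub hY]
    simp [hY₀]
  rw [variance_fun_add hX hY, hcov, hvar]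
  linarith [variance_nonneg X μ]

lemma integral_eq_zero_of_rademacher {X : Ω → ℝ} (hX : Measurable X)
    (hval : ∀ ω, X ω = 1 ∨ X ω = -1) (hdist : μ {ω | X ω = 1} = 1 / 2) :
    ∫ ω, X ω ∂μ = 0 := by
  have hset : MeasurableSet {ω | X ω = 1} := hX (measurableSet_singleton 1)
  have hX_eq ω : X ω = 2 * {ω | X ω = 1}.indicator 1 ω - 1 := by
    rcases hval ω with h | h <;> norm_num [Set.indicator_apply, h]
  rw [integral_congr_ae (ae_of_all _ hX_eq),
    integral_sub (((integrable_const 1).indicator hset).const_mul 2) (integrable_const 1),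
    integral_const_mul, integral_indicator_one hset, measureReal_def, hdist]
  norm_num

end

namespace IsStandardizedIndep

variable {Ω ι : Type*} [MeasurableSpace Ω] {μ : Measure Ω} [IsProbabilityMeasure μ]

lemma of_rademacher {u : Ω → ι → ℝ} (humeas : ∀ i, Measurable fun ω => u ω i)
    (huval : ∀ ω i, u ω i = 1 ∨ u ω i = -1) (hudist : ∀ i, μ {ω | u ω i = 1} = 1 / 2)
    (huindep : iIndepFun (fun i ω => u ω i) μ) : IsStandardizedIndep μ u where
  indep := huindep
  memLp_four i := (memLp_top_of_bound (humeas i).aestronglyMeasurable 1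
    (ae_of_all _ fun ω => by rcases huval ω i with h | h <;> simp [h])).mono_exponent le_top
  integral_eq_zero i := integral_eq_zero_of_rademacher (humeas i) (huval · i) (hudist i)
  integral_sq i := by simp [sq_eq_one_iff.2 (huval _ i)]

lemma of_gaussian {w : Ω → ι → ℝ} (hwmeas : ∀ i, Measurable fun ω => w ω i)
    (hwdist : ∀ i, Measure.map (fun ω => w ω i) μ = gaussianReal 0 1)
    (hwindep : iIndepFun (fun i ω => w ω i) μ) : IsStandardizedIndep μ w := by
  have hlaw i : HasLaw (fun ω => w ω i) (gaussianReal 0 1) μ := ⟨(hwmeas i).aemeasurable, hwdist i⟩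
  have hmean i : ∫ ω, w ω i ∂μ = 0 := by
    rw [(hlaw i).integral_eq, integral_id_gaussianReal]
  have hmemLp i (p : ℝ≥0) : MemLp (fun ω => w ω i) p μ :=
    (memLp_map_measure_iff aestronglyMeasurable_id (hwmeas i).aemeasurable).1
      (by rw [hwdist i]; exact memLp_id_gaussianReal p)
  refine ⟨hwindep, fun i => hmemLp i 4, hmean, fun i => ?_⟩
  have h := variance_eq_sub (hmemLp i 2)
  rw [(hlaw i).variance_eq, variance_id_gaussianReal, hmean, NNReal.coe_one] at h
  simpa using h.symm

end IsStandardizedIndep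

theorem hutchinson_rademacher_le_gaussian_general {Ω : Type*} [MeasurableSpace Ω]
    (μ : Measure Ω) [IsProbabilityMeasure μ] {n : ℕ} (u w : Ω → Fin n → ℝ)
    (A : Matrix (Fin n) (Fin n) ℝ)
    (humeas : ∀ i, Measurable fun ω => u ω i)
    (huval : ∀ ω i, u ω i = 1 ∨ u ω i = -1)
    (hudist : ∀ i, μ {ω | u ω i = 1} = 1 / 2)
    (huindep : iIndepFun
      (fun i ω => u ω i) μ)
    (hwmeas : ∀ i, Measurable fun ω => w ω i)
    (hwdist : ∀ i, Measure.map (fun ω => w ω i) μ = gaussianReal 0 1)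
    (hwindep : iIndepFun
      (fun i ω => w ω i) μ) :
    variance (fun ω => u ω ⬝ᵥ A.mulVec (u ω)) μ ≤
      variance (fun ω => w ω ⬝ᵥ A.mulVec (w ω)) μ := by
  have hu := IsStandardizedIndep.of_rademacher humeas huval hudist huindep
  have hw := IsStandardizedIndep.of_gaussian hwmeas hwdist hwindep
  have hu_diag ω : diagQuadForm A (u ω) = A.trace :=
    diagQuadForm_eq_trace fun i => sq_eq_one_iff.2 (huval ω i)
  simp_rw [dotProduct_mulVec_self_eq, hu_diag]
  calc Var[fun ω => A.trace + offDiagQuadForm A (u ω); μ]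
      ≤ ∫ ω, offDiagQuadForm A (u ω) ^ 2 ∂μ :=
        variance_const_add_le_integral_sq (hu.memLp_offDiagQuadForm A).aestronglyMeasurable _
    _ = ∫ ω, offDiagQuadForm A (w ω) ^ 2 ∂μ := by
        rw [hu.integral_offDiagQuadForm_sq, hw.integral_offDiagQuadForm_sq]
    _ ≤ Var[fun ω => diagQuadForm A (w ω) + offDiagQuadForm A (w ω); μ] :=
        integral_sq_le_variance_add (hw.memLp_diagQuadForm A) (hw.memLp_offDiagQuadForm A)
          (hw.integral_diagQuadForm_mul_offDiagQuadForm A) (hw.integral_offDiagQuadForm A)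

/-- For any symmetric matrix `A`, the variance of the Hutchinson estimator
`vᵀ A v` with i.i.d. Rademacher(1/2) entries is at most the variance of the
estimator with i.i.d. standard Gaussian entries. -/
theorem hutchinson_rademacher_le_gaussian {Ω : Type*} [MeasurableSpace Ω]
    (μ : Measure Ω) [IsProbabilityMeasure μ] {n : ℕ} (u w : Ω → Fin n → ℝ)
    (A : Matrix (Fin n) (Fin n) ℝ) (hA : A.IsSymm)
    (humeas : ∀ i, Measurable fun ω => u ω i)
    (huval : ∀ ω i, u ω i = 1 ∨ u ω i = -1)
    (hudist : ∀ i, μ {ω | u ω i = 1} = 1 / 2)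
    (huindep : iIndepFun
      (fun i ω => u ω i) μ)
    (hwmeas : ∀ i, Measurable fun ω => w ω i)
    (hwdist : ∀ i, Measure.map (fun ω => w ω i) μ = gaussianReal 0 1)
    (hwindep : iIndepFun
      (fun i ω => w ω i) μ) :
    variance (fun ω => u ω ⬝ᵥ A.mulVec (u ω)) μ ≤
      variance (fun ω => w ω ⬝ᵥ A.mulVec (w ω)) μ :=
  hutchinson_rademacher_le_gaussian_general μ u w A humeas huval hudist huindep hwmeas hwdist
    hwindep
end

section
/- The expected joint negative log-likelihood of (y, z) under the conditional law z | y with parameters θ₀ equals (1/2)tr[(S(θ)^{-1} + R(θ)^{-1})(S(θ₀)^{-1} + R(θ₀)^{-1})^{-1}] + ℓ_{S(θ)}(ẑ(θ₀)) + ℓ_{R(θ)}(y − ẑ(θ₀)), where ẑ(θ₀) = (S(θ₀)^{-1} + R(θ₀)^{-1})^{-1} R(θ₀)^{-1} y and ℓ_A(u) is the standard Gaussian negative log-likelihood with covariance A. -/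
open Matrix MeasureTheory

/-- The multivariate Gaussian density with mean `m` and covariance `C`. -/
noncomputable def gaussianPdf {ι : Type*} [Fintype ι] [DecidableEq ι] (m : ι → ℝ)
    (C : Matrix ι ι ℝ) (x : ι → ℝ) : ℝ :=
  (Real.sqrt ((2 * Real.pi) ^ (Fintype.card ι) * C.det))⁻¹ *
    Real.exp (-((x - m) ⬝ᵥ C⁻¹.mulVec (x - m)) / 2)

/-- The standard Gaussian negative log-likelihood with covariance `A`:
`ℓ_A(u) = (1/2)(log det(2πA) + uᵀ A⁻¹ u)`. -/
noncomputable def nll {n : ℕ} (A : Matrix (Fin n) (Fin n) ℝ) (u : Fin n → ℝ) : ℝ :=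
  (1 / 2) * (Real.log ((2 * Real.pi) ^ n * A.det) + u ⬝ᵥ A⁻¹.mulVec u)

/-!
Under the conditional law of `z` given `y`, a Gaussian with mean `ẑ` and covariance
`Γ = (S₀⁻¹ + R₀⁻¹)⁻¹`, the joint negative log-likelihood `ℓ_S(z) + ℓ_R(y - z)` is exactly a
quadratic polynomial in `z - ẑ` with constant term `ℓ_S(ẑ) + ℓ_R(y - ẑ)` and Hessian `S⁻¹ + R⁻¹`.
The expectation of such a polynomial is its constant term plus `tr((S⁻¹ + R⁻¹) Γ) / 2`: writing
`Γ = L Lᵀ` and substituting `z = L w + ẑ` reduces it to the standard Gaussian, whose density is a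
product over coordinates, so its first and second moments follow from the one-dimensional ones by
Fubini.
-/

open Real ProbabilityTheory

lemma integrable_gaussianPDFReal_zero_one_mul_pow (k : ℕ) :
    Integrable fun x ↦ gaussianPDFReal 0 1 x * x ^ k := by
  refine ((integrable_rpow_mul_exp_neg_mul_sq (b := 1 / 2) (by norm_num)
    (s := k) (by linarith [k.cast_nonneg (α := ℝ)])).const_mul (√(2 * π))⁻¹).congr
    (.of_forall fun x ↦ ?_)
  simp only [gaussianPDFReal, rpow_natCast, NNReal.coe_one, mul_one, sub_zero]
  ring_nf

lemma integral_gaussianPDFReal_zero_one_mul :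
    ∫ x, gaussianPDFReal 0 1 x * x = 0 := by
  have := integral_id_gaussianReal (μ := 0) (v := 1)
  rwa [integral_gaussianReal_eq_integral_smul one_ne_zero] at this

lemma integral_gaussianPDFReal_zero_one_mul_sq :
    ∫ x, gaussianPDFReal 0 1 x * x ^ 2 = 1 := by
  have := variance_of_integral_eq_zero (μ := gaussianReal 0 1) (X := fun x ↦ x)
    aemeasurable_id integral_id_gaussianReal
  rw [variance_fun_id_gaussianReal, integral_gaussianReal_eq_integral_smul one_ne_zero] at this
  simpa using this.symm

section

variable {ι : Type*} [Fintype ι]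

lemma mulVec_dotProduct_mulVec_mulVec {α : Type*} [CommSemiring α] (L A : Matrix ι ι α)
    (w : ι → α) :
    L *ᵥ w ⬝ᵥ A *ᵥ (L *ᵥ w) = w ⬝ᵥ (Lᵀ * A * L) *ᵥ w := by
  nth_rewrite 1 [← vecMul_transpose]
  rw [← dotProduct_mulVec, mulVec_mulVec, mulVec_mulVec, Matrix.mul_assoc]

lemma add_dotProduct_mulVec_add {α : Type*} [CommRing α] (A : Matrix ι ι α) (a w : ι → α) :
    (a + w) ⬝ᵥ A *ᵥ (a + w) = a ⬝ᵥ A *ᵥ a + (a ᵥ* A + A *ᵥ a) ⬝ᵥ w + w ⬝ᵥ A *ᵥ w := by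
  rw [mulVec_add, dotProduct_add, add_dotProduct, add_dotProduct, add_dotProduct,
    dotProduct_mulVec a A w, dotProduct_comm w (A *ᵥ a)]
  ring

lemma mul_dotProduct_eq_sum {α : Type*} [CommSemiring α] (p : α) (v w : ι → α) :
    p * (v ⬝ᵥ w) = ∑ i, v i * (p * w i) := by
  simp only [dotProduct, Finset.mul_sum]
  exact Finset.sum_congr rfl fun i _ ↦ by ring

lemma mul_dotProduct_mulVec_eq_sum {α : Type*} [CommSemiring α] (p : α) (N : Matrix ι ι α)
    (w : ι → α) :
    p * (w ⬝ᵥ N *ᵥ w) = ∑ i, ∑ j, N i j * (p * (w i * w j)) := by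
  simp only [dotProduct, mulVec, Finset.mul_sum]
  exact Finset.sum_congr rfl fun i _ ↦ Finset.sum_congr rfl fun j _ ↦ by ring

variable [DecidableEq ι]

lemma prod_pow_single {M : Type*} [CommMonoid M] (w : ι → M) (i : ι) :
    ∏ j, w j ^ (Pi.single i 1 : ι → ℕ) j = w i := by
  simp [Pi.single_apply, pow_ite]

lemma prod_pow_single_add_single {M : Type*} [CommMonoid M] (w : ι → M) (i j : ι) :
    ∏ k, w k ^ (Pi.single i 1 + Pi.single j 1 : ι → ℕ) k = w i * w j := by
  simp only [Pi.add_apply, pow_add, Finset.prod_mul_distrib, prod_pow_single]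

lemma gaussianPdf_zero_one (w : ι → ℝ) :
    gaussianPdf 0 (1 : Matrix ι ι ℝ) w = ∏ i, gaussianPDFReal 0 1 (w i) := by
  have hnorm : √((2 * π) ^ Fintype.card ι) = √(2 * π) ^ Fintype.card ι := by
    rw [sqrt_eq_iff_eq_sq (by positivity) (by positivity), pow_right_comm, sq_sqrt (by positivity)]
  simp only [gaussianPdf, gaussianPDFReal, det_one, inv_one, one_mulVec, sub_zero, mul_one,
    NNReal.coe_one, Finset.prod_mul_distrib, ← Real.exp_sum, Finset.prod_const, Finset.card_univ,
    inv_pow, hnorm, dotProduct, Finset.sum_div, ← Finset.sum_neg_distrib, neg_div, sq]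

lemma integrable_gaussianPdf_zero_one_mul_prod_pow (k : ι → ℕ) :
    Integrable fun w : ι → ℝ ↦ gaussianPdf 0 1 w * ∏ i, w i ^ k i := by
  simp_rw [gaussianPdf_zero_one, ← Finset.prod_mul_distrib]
  exact .fintype_prod fun i ↦ integrable_gaussianPDFReal_zero_one_mul_pow (k i)

lemma integral_gaussianPdf_zero_one_mul_prod_pow (k : ι → ℕ) :
    ∫ w : ι → ℝ, gaussianPdf 0 1 w * ∏ i, w i ^ k i =
      ∏ i, ∫ x, gaussianPDFReal 0 1 x * x ^ k i := by
  simp_rw [gaussianPdf_zero_one, ← Finset.prod_mul_distrib]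
  exact integral_fintype_prod_volume_eq_prod (fun i x ↦ gaussianPDFReal 0 1 x * x ^ k i)

lemma integrable_gaussianPdf_zero_one_mul_apply (i : ι) :
    Integrable fun w : ι → ℝ ↦ gaussianPdf 0 1 w * w i := by
  simpa only [prod_pow_single] using
    integrable_gaussianPdf_zero_one_mul_prod_pow (Pi.single i 1)

lemma integrable_gaussianPdf_zero_one_mul_apply_mul_apply (i j : ι) :
    Integrable fun w : ι → ℝ ↦ gaussianPdf 0 1 w * (w i * w j) := by
  refine (integrable_gaussianPdf_zero_one_mul_prod_pow (Pi.single i 1 + Pi.single j 1)).congr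
    (.of_forall fun w ↦ ?_)
  simp only [prod_pow_single_add_single]

lemma integral_gaussianPdf_zero_one_mul_apply (i : ι) :
    ∫ w : ι → ℝ, gaussianPdf 0 1 w * w i = 0 := by
  calc ∫ w : ι → ℝ, gaussianPdf 0 1 w * w i
      = ∫ w : ι → ℝ, gaussianPdf 0 1 w * ∏ j, w j ^ (Pi.single i 1 : ι → ℕ) j := by
        simp only [prod_pow_single]
    _ = 0 := by
      rw [integral_gaussianPdf_zero_one_mul_prod_pow]
      exact Finset.prod_eq_zero (Finset.mem_univ i)
        (by simpa using integral_gaussianPDFReal_zero_one_mul)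

lemma integral_gaussianPdf_zero_one_mul_apply_mul_apply (i j : ι) :
    ∫ w : ι → ℝ, gaussianPdf 0 1 w * (w i * w j) = (1 : Matrix ι ι ℝ) i j := by
  calc ∫ w : ι → ℝ, gaussianPdf 0 1 w * (w i * w j)
      = ∫ w : ι → ℝ,
          gaussianPdf 0 1 w * ∏ k, w k ^ (Pi.single i 1 + Pi.single j 1 : ι → ℕ) k := by
        simp only [prod_pow_single_add_single]
    _ = (1 : Matrix ι ι ℝ) i j := by
      rw [integral_gaussianPdf_zero_one_mul_prod_pow]
      rcases eq_or_ne i j with rfl | hij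
      · refine (Finset.prod_eq_one fun k _ ↦ ?_).trans (one_apply_eq i).symm
        rcases eq_or_ne k i with rfl | hki
        · simpa using integral_gaussianPDFReal_zero_one_mul_sq
        · simpa [hki] using integral_gaussianPDFReal_eq_one 0 one_ne_zero
      · refine (Finset.prod_eq_zero (Finset.mem_univ i) ?_).trans (one_apply_ne hij).symm
        simpa [hij.symm] using integral_gaussianPDFReal_zero_one_mul

lemma integrable_gaussianPdf_zero_one : Integrable (gaussianPdf (0 : ι → ℝ) 1) := by
  simpa using integrable_gaussianPdf_zero_one_mul_prod_pow (0 : ι → ℕ)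

lemma integral_gaussianPdf_zero_one : ∫ w : ι → ℝ, gaussianPdf 0 1 w = 1 := by
  simpa [integral_gaussianPDFReal_eq_one] using
    integral_gaussianPdf_zero_one_mul_prod_pow (0 : ι → ℕ)

lemma integrable_gaussianPdf_zero_one_mul_dotProduct (v : ι → ℝ) :
    Integrable fun w : ι → ℝ ↦ gaussianPdf 0 1 w * (v ⬝ᵥ w) := by
  simp_rw [mul_dotProduct_eq_sum]
  exact integrable_finsetSum _ fun i _ ↦
    (integrable_gaussianPdf_zero_one_mul_apply i).const_mul _

lemma integral_gaussianPdf_zero_one_mul_dotProduct (v : ι → ℝ) :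
    ∫ w : ι → ℝ, gaussianPdf 0 1 w * (v ⬝ᵥ w) = 0 := by
  simp_rw [mul_dotProduct_eq_sum]
  rw [integral_finsetSum _ fun i _ ↦ (integrable_gaussianPdf_zero_one_mul_apply i).const_mul _]
  simp [integral_const_mul, integral_gaussianPdf_zero_one_mul_apply]

lemma integrable_gaussianPdf_zero_one_mul_dotProduct_mulVec (N : Matrix ι ι ℝ) :
    Integrable fun w : ι → ℝ ↦ gaussianPdf 0 1 w * (w ⬝ᵥ N *ᵥ w) := by
  simp_rw [mul_dotProduct_mulVec_eq_sum]
  exact integrable_finsetSum _ fun i _ ↦ integrable_finsetSum _ fun j _ ↦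
    (integrable_gaussianPdf_zero_one_mul_apply_mul_apply i j).const_mul _

lemma integral_gaussianPdf_zero_one_mul_dotProduct_mulVec (N : Matrix ι ι ℝ) :
    ∫ w : ι → ℝ, gaussianPdf 0 1 w * (w ⬝ᵥ N *ᵥ w) = N.trace := by
  have hint (i j : ι) : Integrable fun w : ι → ℝ ↦ N i j * (gaussianPdf 0 1 w * (w i * w j)) :=
    (integrable_gaussianPdf_zero_one_mul_apply_mul_apply i j).const_mul _
  have hrow (i : ι) :
      Integrable fun w : ι → ℝ ↦ ∑ j, N i j * (gaussianPdf 0 1 w * (w i * w j)) :=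
    integrable_finsetSum _ fun j _ ↦ hint i j
  simp_rw [mul_dotProduct_mulVec_eq_sum]
  rw [integral_finsetSum _ fun i _ ↦ hrow i]
  simp_rw [integral_finsetSum _ fun j _ ↦ hint _ j, integral_const_mul,
    integral_gaussianPdf_zero_one_mul_apply_mul_apply]
  simp [one_apply, trace]

lemma integral_gaussianPdf_zero_one_mul_quadratic (c : ℝ) (v : ι → ℝ) (N : Matrix ι ι ℝ) :
    ∫ w : ι → ℝ, gaussianPdf 0 1 w * (c + v ⬝ᵥ w + w ⬝ᵥ N *ᵥ w / 2) = c + N.trace / 2 := by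
  have hsplit : ∀ w : ι → ℝ, gaussianPdf 0 1 w * (c + v ⬝ᵥ w + w ⬝ᵥ N *ᵥ w / 2) =
      c * gaussianPdf 0 1 w + gaussianPdf 0 1 w * (v ⬝ᵥ w) +
        gaussianPdf 0 1 w * (w ⬝ᵥ N *ᵥ w) / 2 :=
    fun w ↦ by ring
  have hconst : Integrable fun w : ι → ℝ ↦ c * gaussianPdf 0 1 w :=
    integrable_gaussianPdf_zero_one.const_mul c
  have hconst_lin : Integrable fun w : ι → ℝ ↦
      c * gaussianPdf 0 1 w + gaussianPdf 0 1 w * (v ⬝ᵥ w) :=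
    hconst.add (integrable_gaussianPdf_zero_one_mul_dotProduct v)
  simp_rw [hsplit]
  rw [integral_add hconst_lin
      ((integrable_gaussianPdf_zero_one_mul_dotProduct_mulVec N).div_const 2),
    integral_add hconst (integrable_gaussianPdf_zero_one_mul_dotProduct v),
    integral_const_mul, integral_div, integral_gaussianPdf_zero_one,
    integral_gaussianPdf_zero_one_mul_dotProduct,
    integral_gaussianPdf_zero_one_mul_dotProduct_mulVec]
  ring

lemma integral_comp_mulVec_add {L : Matrix ι ι ℝ} (hL : L.det ≠ 0) (m : ι → ℝ)
    (g : (ι → ℝ) → ℝ) :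
    ∫ w, g (L *ᵥ w + m) = |L.det|⁻¹ * ∫ z, g z := by
  have hemb : MeasurableEmbedding (toLin' L) :=
    (L.toLinearEquiv' (L.invertibleOfIsUnitDet hL.isUnit)).toContinuousLinearEquiv.toHomeomorph
      |>.measurableEmbedding
  calc ∫ w, g (L *ᵥ w + m)
      = ∫ z, g (z + m) ∂(Measure.map (toLin' L) volume) := by
        simp only [hemb.integral_map, toLin'_apply]
    _ = |L.det|⁻¹ * ∫ z, g z := by
        rw [Real.map_matrix_volume_pi_eq_smul_volume_pi hL, integral_smul_measure,
          integral_add_right_eq_self, ENNReal.toReal_ofReal (abs_nonneg _), abs_inv, smul_eq_mul]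

lemma gaussianPdf_mulVec_add {L : Matrix ι ι ℝ} (hL : L.det ≠ 0) (m w : ι → ℝ) :
    gaussianPdf m (L * Lᵀ) (L *ᵥ w + m) = |L.det|⁻¹ * gaussianPdf 0 1 w := by
  have hunit : IsUnit L.det := hL.isUnit
  have hunitT : IsUnit Lᵀ.det := by rwa [det_transpose]
  have hcancel : Lᵀ * (L * Lᵀ)⁻¹ * L = 1 := by
    rw [Matrix.mul_inv_rev, ← Matrix.mul_assoc, mul_nonsing_inv _ hunitT, Matrix.one_mul,
      nonsing_inv_mul _ hunit]
  have hquad : L *ᵥ w ⬝ᵥ (L * Lᵀ)⁻¹ *ᵥ (L *ᵥ w) = w ⬝ᵥ w := by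
    rw [mulVec_dotProduct_mulVec_mulVec, hcancel, one_mulVec]
  have hdet : √((2 * π) ^ Fintype.card ι * (L * Lᵀ).det) =
      √((2 * π) ^ Fintype.card ι) * |L.det| := by
    rw [det_mul, det_transpose, sqrt_mul (by positivity), sqrt_mul_self_eq_abs]
  simp only [gaussianPdf, add_sub_cancel_right, hquad, hdet, sub_zero, inv_one, one_mulVec,
    det_one, mul_one, mul_inv]
  ring

lemma integral_gaussianPdf_mul_eq_integral_gaussianPdf_zero_one {L : Matrix ι ι ℝ}
    (hL : L.det ≠ 0) (m : ι → ℝ) (f : (ι → ℝ) → ℝ) :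
    ∫ z, gaussianPdf m (L * Lᵀ) z * f z = ∫ w, gaussianPdf 0 1 w * f (L *ᵥ w + m) := by
  have := integral_comp_mulVec_add hL m fun z ↦ gaussianPdf m (L * Lᵀ) z * f z
  simp only [gaussianPdf_mulVec_add hL, mul_assoc, integral_const_mul] at this
  exact (mul_left_cancel₀ (by positivity) this).symm

open scoped MatrixOrder in
lemma integral_gaussianPdf_mul_quadratic {C : Matrix ι ι ℝ} (hC : C.PosDef) (m : ι → ℝ) (c : ℝ)
    (v : ι → ℝ) (N : Matrix ι ι ℝ) :
    ∫ z, gaussianPdf m C z * (c + v ⬝ᵥ (z - m) + (z - m) ⬝ᵥ N *ᵥ (z - m) / 2) =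
      c + (N * C).trace / 2 := by
  obtain ⟨B, hB⟩ := CStarAlgebra.nonneg_iff_eq_star_mul_self.mp hC.posSemidef.nonneg
  have hCLL : C = Bᵀ * Bᵀᵀ := by
    rwa [transpose_transpose, ← conjTranspose_eq_transpose_of_trivial, ← star_eq_conjTranspose]
  have hL : Bᵀ.det ≠ 0 := by
    have := hC.det_pos.ne'
    rw [hCLL, det_mul] at this
    exact left_ne_zero_of_mul this
  rw [hCLL, integral_gaussianPdf_mul_eq_integral_gaussianPdf_zero_one hL]
  simp only [add_sub_cancel_right, dotProduct_mulVec v, mulVec_dotProduct_mulVec_mulVec]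
  rw [integral_gaussianPdf_zero_one_mul_quadratic, trace_mul_cycle, trace_mul_comm]

end

lemma nll_add {n : ℕ} (A : Matrix (Fin n) (Fin n) ℝ) (a w : Fin n → ℝ) :
    nll A (a + w) =
      nll A a + ((1 / 2 : ℝ) • (a ᵥ* A⁻¹ + A⁻¹ *ᵥ a)) ⬝ᵥ w + w ⬝ᵥ A⁻¹ *ᵥ w / 2 := by
  simp only [nll, add_dotProduct_mulVec_add, smul_dotProduct, smul_eq_mul]
  ring

lemma nll_add_nll_sub {n : ℕ} (S R : Matrix (Fin n) (Fin n) ℝ) (y m z : Fin n → ℝ) :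
    nll S z + nll R (y - z) =
      nll S m + nll R (y - m) +
        ((1 / 2 : ℝ) • (m ᵥ* S⁻¹ + S⁻¹ *ᵥ m - ((y - m) ᵥ* R⁻¹ + R⁻¹ *ᵥ (y - m)))) ⬝ᵥ (z - m) +
        (z - m) ⬝ᵥ (S⁻¹ + R⁻¹) *ᵥ (z - m) / 2 := by
  have hS := nll_add S m (z - m)
  have hR := nll_add R (y - m) (-(z - m))
  rw [add_sub_cancel] at hS
  rw [show y - m + -(z - m) = y - z by abel] at hR
  rw [hS, hR]
  simp only [smul_sub, sub_dotProduct, dotProduct_neg, neg_dotProduct, mulVec_neg, neg_neg,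
    add_mulVec, dotProduct_add]
  ring

theorem E_function_formula_general {n : ℕ}
    (S R S₀ R₀ : Matrix (Fin n) (Fin n) ℝ)
    (hS₀ : S₀.PosDef) (hR₀ : R₀.PosDef)
    (y : Fin n → ℝ) :
    ∫ z : Fin n → ℝ,
        gaussianPdf ((S₀⁻¹ + R₀⁻¹)⁻¹.mulVec (R₀⁻¹.mulVec y)) (S₀⁻¹ + R₀⁻¹)⁻¹ z *
          (nll S z + nll R (y - z)) =
      (1 / 2) * ((S⁻¹ + R⁻¹) * (S₀⁻¹ + R₀⁻¹)⁻¹).trace +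
        nll S ((S₀⁻¹ + R₀⁻¹)⁻¹.mulVec (R₀⁻¹.mulVec y)) +
        nll R (y - (S₀⁻¹ + R₀⁻¹)⁻¹.mulVec (R₀⁻¹.mulVec y)) := by
  rw [integral_congr_ae (.of_forall fun z ↦ congrArg (_ * ·)
      (nll_add_nll_sub S R y ((S₀⁻¹ + R₀⁻¹)⁻¹ *ᵥ R₀⁻¹ *ᵥ y) z)),
    integral_gaussianPdf_mul_quadratic (hS₀.inv.add hR₀.inv).inv]
  ring

/-- The E function: the expectation of the joint negative log-likelihood
`ℓ_{S(θ)}(z) + ℓ_{R(θ)}(y − z)` under the conditional Gaussian law of `z | y`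
at parameters `θ₀` (mean `ẑ(θ₀) = (S₀⁻¹ + R₀⁻¹)⁻¹ R₀⁻¹ y`, covariance
`(S₀⁻¹ + R₀⁻¹)⁻¹`) equals the trace term plus `ℓ_{S}(ẑ) + ℓ_{R}(y − ẑ)`. -/
theorem E_function_formula {n : ℕ}
    (S R S₀ R₀ : Matrix (Fin n) (Fin n) ℝ)
    (hS : S.PosDef) (hR : R.PosDef) (hS₀ : S₀.PosDef) (hR₀ : R₀.PosDef)
    (y : Fin n → ℝ) :
    ∫ z : Fin n → ℝ,
        gaussianPdf ((S₀⁻¹ + R₀⁻¹)⁻¹.mulVec (R₀⁻¹.mulVec y)) (S₀⁻¹ + R₀⁻¹)⁻¹ z *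
          (nll S z + nll R (y - z)) =
      (1 / 2) * ((S⁻¹ + R⁻¹) * (S₀⁻¹ + R₀⁻¹)⁻¹).trace +
        nll S ((S₀⁻¹ + R₀⁻¹)⁻¹.mulVec (R₀⁻¹.mulVec y)) +
        nll R (y - (S₀⁻¹ + R₀⁻¹)⁻¹.mulVec (R₀⁻¹.mulVec y)) :=
  E_function_formula_general S R S₀ R₀ hS₀ hR₀ y
end
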